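/- The class number of the imaginary quadratic field ℚ(√-47) equals 5. -/

import Mathlib

/-!
Put `θ = (1 + α) / 2`, so that `θ ^ 2 = θ - 12`. The order `ℤ[θ]` has discriminant `-47`, hence
`47 • 𝓞 K ⊆ ℤ[θ]`, and integrality of the trace and norm of `x = (u + v θ) / 47` forces
`47 ∣ u, v`; so `𝓞 K = ℤ[θ]` and `discr K = -47`. The Minkowski bound `2 √47 / π < 5` puts an
ideal of norm at most `4` in every class, and its prime factors lie over `2` or `3`. These are
`𝔭 = (2, θ)`, `𝔭' = (2, θ + 1)`, `𝔮 = (3, θ)` and `𝔮' = (3, θ - 1)`, and the factorisations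
`(2) = 𝔭 𝔭'`, `(θ) = 𝔭² 𝔮`, `(3) = 𝔮 𝔮'`, `(θ + 4) = 𝔭⁵` show that the class of `𝔭` generates the
class group and has order dividing `5`. It is not trivial: `a + b θ` has norm
`a² + a b + 12 b² ≠ 2`.
-/

open Polynomial NumberField Module Ideal
open scoped nonZeroDivisors Real

section QuadraticBasis

variable {R S : Type*} [CommRing R] [CommRing S] [Algebra R S] {B : Basis (Fin 2) R S} {t : S}
  {a b : R}

theorem Algebra.leftMulMatrix_smul_one_add_smul (hB : ⇑B = ![1, t])
    (ht : t * t = a • 1 + b • t) (x y : R) :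
    Algebra.leftMulMatrix B (x • 1 + y • t) = !![x, a * y; y, x + b * y] := by
  have hmul : (x • 1 + y • t) * t = (a * y) • 1 + (x + b * y) • t := by
    rw [add_mul, smul_mul_assoc, smul_mul_assoc, one_mul, ht]
    module
  have h1 : B.repr 1 = Finsupp.single 0 1 := by simpa [hB] using B.repr_self 0
  have hrt : B.repr t = Finsupp.single 1 1 := by simpa [hB] using B.repr_self 1
  ext i j
  rw [Algebra.leftMulMatrix_eq_repr_mul]
  fin_cases i <;> fin_cases j <;> simp [hB, hmul, h1, hrt]

theorem Algebra.norm_smul_one_add_smul (hB : ⇑B = ![1, t]) (ht : t * t = a • 1 + b • t)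
    (x y : R) : Algebra.norm R (x • 1 + y • t) = x ^ 2 + b * x * y - a * y ^ 2 := by
  rw [Algebra.norm_eq_matrix_det B, Algebra.leftMulMatrix_smul_one_add_smul hB ht,
    Matrix.det_fin_two_of]
  ring

theorem Algebra.trace_smul_one_add_smul (hB : ⇑B = ![1, t]) (ht : t * t = a • 1 + b • t)
    (x y : R) : Algebra.trace R S (x • 1 + y • t) = 2 * x + b * y := by
  rw [Algebra.trace_eq_matrix_trace B, Algebra.leftMulMatrix_smul_one_add_smul hB ht,
    Matrix.trace_fin_two_of]
  ring

theorem Algebra.discr_of_basis_eq_one_root (hB : ⇑B = ![1, t]) (ht : t * t = a • 1 + b • t) :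
    Algebra.discr R B = b ^ 2 + 4 * a := by
  have htr (x y : R) := Algebra.trace_smul_one_add_smul hB ht x y
  have h1 : Algebra.trace R S 1 = 2 := by simpa using htr 1 0
  have ht1 : Algebra.trace R S t = b := by simpa using htr 0 1
  have htt : Algebra.trace R S (t * t) = 2 * a + b * b := by rw [ht]; exact htr a b
  rw [Algebra.discr_def, Matrix.det_fin_two]
  simp only [Algebra.traceMatrix_apply, Algebra.traceForm_apply, hB, Matrix.cons_val_zero,
    Matrix.cons_val_one, mul_one, one_mul, h1, ht1, htt]
  ring

theorem aeval_X_sq_sub_C_mul_X_sub_C_of_mul_self_eq (ht : t * t = a • 1 + b • t) :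
    aeval t (X ^ 2 - C b * X - C a) = 0 := by
  simp only [map_sub, map_mul, aeval_X, aeval_C, Algebra.algebraMap_eq_smul_one, sq, ht,
    smul_mul_assoc, one_mul]
  module

theorem isIntegral_of_mul_self_eq (ht : t * t = a • 1 + b • t) : IsIntegral R t :=
  ⟨X ^ 2 - C b * X - C a, by monicity!, aeval_X_sq_sub_C_mul_X_sub_C_of_mul_self_eq ht⟩

theorem Module.Basis.exists_eq_smul_one_add_smul (hB : ⇑B = ![1, t]) (x : S) :
    ∃ u v : R, x = u • 1 + v • t :=
  ⟨B.repr x 0, B.repr x 1, by simpa [Fin.sum_univ_two, hB] using (B.sum_repr x).symm⟩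

def PowerBasis.ofBasisFinTwo (B : Basis (Fin 2) R S) (hB : ⇑B = ![1, t]) : PowerBasis R S where
  gen := t
  dim := 2
  basis := B
  basis_eq_pow i := by fin_cases i <;> simp [hB]

theorem Algebra.mem_adjoin_singleton_iff_of_mul_self [Nontrivial R]
    (ht : t * t = a • 1 + b • t) {x : S} :
    x ∈ Algebra.adjoin R {t} ↔ ∃ u v : R, x = u • 1 + v • t := by
  classical
  have hmonic : (X ^ 2 - C b * X - C a : R[X]).Monic := by monicity!
  have hroot := aeval_X_sq_sub_C_mul_X_sub_C_of_mul_self_eq ht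
  have hdeg : (X ^ 2 - C b * X - C a : R[X]).natDegree = 2 := by compute_degree!
  rw [← Subalgebra.mem_toSubmodule, ← Submodule.span_range_natDegree_eq_adjoin hmonic hroot,
    hdeg, Finset.coe_image, Finset.coe_range,
    show (Set.Iio 2 : Set ℕ) = {0, 1} by ext n; simp; omega, Set.image_pair, pow_zero, pow_one,
    Submodule.mem_span_pair]
  simp only [eq_comm]

theorem minpoly_eq_of_basis_eq_one_root [Nontrivial R] (hB : ⇑B = ![1, t])
    (ht : t * t = a • 1 + b • t) : minpoly R t = X ^ 2 - C b * X - C a := by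
  have hdeg : (X ^ 2 - C b * X - C a : R[X]).degree = 2 := by compute_degree!
  refine (minpoly.unique' R t (by monicity!) (aeval_X_sq_sub_C_mul_X_sub_C_of_mul_self_eq ht)
    fun q hq ↦ or_iff_not_imp_left.2 fun hq0 hroot ↦ ?_).symm
  exact ((PowerBasis.ofBasisFinTwo B hB).dim_le_degree_of_root hq0 hroot).not_gt
    (by rwa [hdeg] at hq)

theorem exists_algHom_apply_eq_of_mul_self_eq [Nontrivial R] (hB : ⇑B = ![1, t])
    (ht : t * t = a • 1 + b • t) {T : Type*} [CommRing T] [Algebra R T] {e : T}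
    (he : e * e = a • 1 + b • e) : ∃ f : S →ₐ[R] T, f t = e := by
  let pb := PowerBasis.ofBasisFinTwo B hB
  have hroot : aeval e (minpoly R pb.gen) = 0 := by
    rw [show pb.gen = t from rfl, minpoly_eq_of_basis_eq_one_root hB ht]
    exact aeval_X_sq_sub_C_mul_X_sub_C_of_mul_self_eq he
  exact ⟨pb.lift e hroot, pb.lift_gen e hroot⟩

end QuadraticBasis

theorem Module.Basis.exists_eq_one_root_of_finrank_eq_two {F A : Type*} [Field F] [Ring A]
    [Nontrivial A] [Algebra F A] (hdim : finrank F A = 2) {t : A}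
    (ht : t ∉ Set.range (algebraMap F A)) : ∃ B : Basis (Fin 2) F A, ⇑B = ![1, t] := by
  have hli : LinearIndependent F ![1, t] :=
    (LinearIndependent.pair_iff' one_ne_zero).mpr fun q hq ↦
      ht ⟨q, by rw [Algebra.algebraMap_eq_smul_one, hq]⟩
  exact ⟨basisOfLinearIndependentOfCardEqFinrank hli (by simp [hdim]),
    coe_basisOfLinearIndependentOfCardEqFinrank _ _⟩

theorem Ideal.span_pair_mul_span_pair_eq_of_isCoprime {R : Type*} [CommRing R] {p x y : R}
    (hxy : IsCoprime x y) (hdvd : p ∣ x * y) : span {p, x} * span {p, y} = span {p} := by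
  refine le_antisymm ?_ ?_
  · rw [span_pair_mul_span_pair, span_le]
    rintro z hz
    simp only [Set.mem_insert_iff, Set.mem_singleton_iff] at hz
    rw [SetLike.mem_coe, mem_span_singleton]
    rcases hz with rfl | rfl | rfl | rfl
    exacts [dvd_mul_right _ _, dvd_mul_right _ _, dvd_mul_left _ _, hdvd]
  · obtain ⟨u, v, huv⟩ := hxy
    have hxp : x * p ∈ span {p, x} * span {p, y} :=
      mul_mem_mul (subset_span (by simp)) (subset_span (by simp))
    have hpy : p * y ∈ span {p, x} * span {p, y} :=
      mul_mem_mul (subset_span (by simp)) (subset_span (by simp))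
    have hp := add_mem (mul_mem_left _ u hxp) (mul_mem_left _ v hpy)
    rw [span_singleton_le_iff_mem]
    convert hp using 1
    linear_combination (-p) * huv

theorem Ideal.IsPrime.eq_or_eq_of_mul_le {R : Type*} [CommRing R] {M P Q : Ideal R}
    (hM : M.IsPrime) (hP : P.IsMaximal) (hQ : Q.IsMaximal) (h : P * Q ≤ M) : M = P ∨ M = Q :=
  (hM.mul_le.mp h).imp (fun h ↦ (hP.eq_of_le hM.ne_top h).symm)
    (fun h ↦ (hQ.eq_of_le hM.ne_top h).symm)

theorem Ideal.span_ne_top_of_map_eq_zero {R T : Type*} [CommRing R] [Semiring T] [Nontrivial T]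
    (f : R →+* T) {s : Set R} (hs : ∀ x ∈ s, f x = 0) : span s ≠ ⊤ :=
  ne_top_of_le_ne_top (RingHom.ker_ne_top f) (span_le.mpr hs)

section AbsNorm

variable {S : Type*} [CommRing S] [IsDedekindDomain S] [Module.Free ℤ S]

theorem Ideal.eq_of_le_of_absNorm_eq [Module.Finite ℤ S] {I J : Ideal S} (hle : I ≤ J)
    (h : absNorm I = absNorm J) : I = J := by
  obtain ⟨C, rfl⟩ := dvd_iff_le.mpr hle
  by_cases hJ : absNorm J = 0
  · simp [absNorm_eq_zero_iff.mp hJ]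
  rw [map_mul] at h
  have hC : absNorm C = 1 :=
    Nat.eq_of_mul_eq_mul_left (Nat.pos_of_ne_zero hJ) (h.trans (mul_one _).symm)
  rw [absNorm_eq_one_iff.mp hC, mul_top]

theorem Ideal.absNorm_eq_of_absNorm_mul_eq_sq {p : ℕ} (hp : p.Prime) {P Q : Ideal S}
    (h : absNorm (P * Q) = p ^ 2) (hP : P ≠ ⊤) (hQ : Q ≠ ⊤) : absNorm P = p := by
  rw [map_mul] at h
  obtain ⟨k, hk, hPk⟩ := (Nat.dvd_prime_pow hp).mp ⟨_, h.symm⟩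
  interval_cases k
  · exact absurd (absNorm_eq_one_iff.mp (by simpa using hPk)) hP
  · simpa using hPk
  · rw [hPk] at h
    have hQ1 : absNorm Q = 1 :=
      Nat.eq_of_mul_eq_mul_left (by positivity [hp.pos]) (h.trans (mul_one _).symm)
    exact absurd (absNorm_eq_one_iff.mp hQ1) hQ

theorem Ideal.isMaximal_of_absNorm_eq_prime [Module.Finite ℤ S] {p : ℕ} (hp : p.Prime) {P : Ideal S}
    (h : absNorm P = p) : P.IsMaximal :=
  (isPrime_of_irreducible_absNorm (h ▸ hp)).isMaximal
    (fun h0 ↦ hp.ne_zero (by rw [← h, h0, absNorm_bot]))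

theorem Ideal.natCast_mem_of_absNorm_dvd [Module.Finite ℤ S] {I : Ideal S} {n : ℕ}
    (h : absNorm I ∣ n) : (n : S) ∈ I := by
  obtain ⟨k, rfl⟩ := h
  rw [Nat.cast_mul]
  exact mul_mem_right _ _ (absNorm_mem I)

end AbsNorm

theorem ClassGroup.mk0_mem_of_forall_isPrime_le {R : Type*} [CommRing R] [IsDedekindDomain R]
    (H : Subgroup (ClassGroup R)) (I : (Ideal R)⁰)
    (h : ∀ P : (Ideal R)⁰, (P : Ideal R).IsPrime → (I : Ideal R) ≤ P → ClassGroup.mk0 P ∈ H) :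
    ClassGroup.mk0 I ∈ H := by
  obtain ⟨I, hI⟩ := I
  induction I using UniqueFactorizationMonoid.induction_on_prime with
  | h₁ => exact absurd hI zero_notMem_nonZeroDivisors
  | h₂ J hJ =>
    obtain rfl := Ideal.isUnit_iff.mp hJ
    rw [(ClassGroup.mk0_eq_one_iff hI).mpr top_isPrincipal]
    exact one_mem H
  | h₃ J P hJ hP ih =>
    have hP0 : P ∈ (Ideal R)⁰ := mem_nonZeroDivisors_of_ne_zero hP.ne_zero
    have hJ0 : J ∈ (Ideal R)⁰ := mem_nonZeroDivisors_of_ne_zero hJ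
    have hmul : (⟨P * J, hI⟩ : (Ideal R)⁰) = ⟨P, hP0⟩ * ⟨J, hJ0⟩ := rfl
    rw [hmul, map_mul]
    exact mul_mem (h _ (isPrime_of_prime hP) mul_le_left)
      (ih hJ0 fun Q hQ hle ↦ h Q hQ (mul_le_right.trans hle))

theorem ClassGroup.mk0_mem_of_mul_eq_span_singleton {R : Type*} [CommRing R]
    [IsDedekindDomain R] (H : Subgroup (ClassGroup R)) {I J : (Ideal R)⁰} {x : R} (hx : x ≠ 0)
    (h : (I : Ideal R) * J = span {x}) (hJ : ClassGroup.mk0 J ∈ H) : ClassGroup.mk0 I ∈ H := by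
  rw [ClassGroup.mk0_eq_mk0_inv_iff.mpr ⟨x, hx, h⟩]
  exact inv_mem hJ

theorem mul_self_eq_smul_of_mul_self_eq_sub {R A : Type*} [CommRing R] [Ring A] [Algebra R A]
    {t : A} (ht : t * t = t - 12) : t * t = (-12 : R) • 1 + (1 : R) • t := by
  rw [ht, Algebra.smul_def, Algebra.smul_def, map_neg, map_ofNat, map_one]
  noncomm_ring

theorem notMem_range_algebraMap_of_mul_self_eq_sub {A : Type*} [Ring A] [Nontrivial A]
    [Algebra ℚ A] {t : A} (ht : t * t = t - 12) : t ∉ Set.range (algebraMap ℚ A) := by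
  rintro ⟨q, rfl⟩
  have hq : q * q = q - 12 := (algebraMap ℚ A).injective (by rwa [map_mul, map_sub, map_ofNat])
  nlinarith [sq_nonneg (2 * q - 1)]

theorem Int.forty_seven_dvd_of_dvd_of_sq_dvd {u v : ℤ} (htr : 47 ∣ 2 * u + v)
    (hnm : 47 ^ 2 ∣ u ^ 2 + u * v + 12 * v ^ 2) : 47 ∣ u ∧ 47 ∣ v := by
  obtain ⟨s, hs⟩ := htr
  obtain ⟨n, hn⟩ := hnm
  have hv : v = 47 * s - 2 * u := by omega
  subst hv
  have hu2 : u ^ 2 = 47 * (n + u * s - 12 * s ^ 2) :=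
    mul_left_cancel₀ (by norm_num : (47 : ℤ) ≠ 0) (by linear_combination hn)
  obtain ⟨u', rfl⟩ : (47 : ℤ) ∣ u := (by norm_num : Prime (47 : ℤ)).dvd_of_dvd_pow ⟨_, hu2⟩
  exact ⟨⟨u', rfl⟩, ⟨s - 2 * u', by ring⟩⟩

theorem Int.natAbs_sq_add_mul_add_twelve_sq_ne_two (u v : ℤ) :
    (u ^ 2 + u * v + 12 * v ^ 2).natAbs ≠ 2 := by
  intro h
  have h2 : u ^ 2 + u * v + 12 * v ^ 2 = 2 := by
    rcases Int.natAbs_eq_iff.mp h with h | h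
    · exact h
    · push_cast at h
      nlinarith [sq_nonneg (2 * u + v), sq_nonneg v]
  obtain rfl : v = 0 := by nlinarith [sq_nonneg (2 * u + v), sq_nonneg v]
  have hu : -1 ≤ u ∧ u ≤ 1 := by constructor <;> nlinarith
  obtain ⟨hu₁, hu₂⟩ := hu
  interval_cases u <;> omega

section QuadraticOrder

variable {S : Type*} [CommRing S] {ϑ : S}

theorem span_natCast_sub_intCast_ne_top {B : Basis (Fin 2) ℤ S} (hB : ⇑B = ![1, ϑ])
    (hϑ : ϑ * ϑ = ϑ - 12) {n : ℕ} (hn : 1 < n) (e : ℤ)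
    (he : ((e * e - e + 12 : ℤ) : ZMod n) = 0) : span {(n : S), ϑ - e} ≠ ⊤ := by
  have := Fact.mk hn
  have he' : (e : ZMod n) * e = (-12 : ℤ) • 1 + (1 : ℤ) • (e : ZMod n) := by
    push_cast at he ⊢
    linear_combination he
  obtain ⟨f, hf⟩ := exists_algHom_apply_eq_of_mul_self_eq hB
    (mul_self_eq_smul_of_mul_self_eq_sub hϑ) he'
  refine span_ne_top_of_map_eq_zero f.toRingHom ?_
  simp [hf]

theorem span_two_mul_span_two (hϑ : ϑ * ϑ = ϑ - 12) :
    span {(2 : S), ϑ} * span {2, ϑ + 1} = span {2} :=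
  span_pair_mul_span_pair_eq_of_isCoprime ⟨-1, 1, by ring⟩ ⟨ϑ - 6, by linear_combination hϑ⟩

theorem span_three_mul_span_three (hϑ : ϑ * ϑ = ϑ - 12) :
    span {(3 : S), ϑ} * span {3, ϑ - 1} = span {3} :=
  span_pair_mul_span_pair_eq_of_isCoprime ⟨1, -1, by ring⟩ ⟨-4, by linear_combination hϑ⟩

end QuadraticOrder

section QuadraticField

variable {K : Type*} [Field K] [NumberField K] {θ : K}

theorem exists_neg_forty_seven_smul_eq_of_isIntegral {B : Basis (Fin 2) ℚ K}
    (hB : ⇑B = ![1, θ]) (hθ : θ * θ = θ - 12) {x : K} (hx : IsIntegral ℤ x) :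
    ∃ u v : ℤ, (-47 : ℚ) • x = u • 1 + v • θ := by
  have hθℤ := mul_self_eq_smul_of_mul_self_eq_sub (R := ℤ) hθ
  have h := Algebra.discr_mul_isIntegral_mem_adjoin ℚ (B := PowerBasis.ofBasisFinTwo B hB)
    (isIntegral_of_mul_self_eq hθℤ) hx
  change Algebra.discr ℚ B • x ∈ Algebra.adjoin ℤ {θ} at h
  rwa [Algebra.discr_of_basis_eq_one_root hB (mul_self_eq_smul_of_mul_self_eq_sub hθ),
    Algebra.mem_adjoin_singleton_iff_of_mul_self hθℤ,
    show (1 : ℚ) ^ 2 + 4 * -12 = -47 by norm_num] at h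

theorem exists_eq_smul_one_add_smul_of_isIntegral {B : Basis (Fin 2) ℚ K} (hB : ⇑B = ![1, θ])
    (hθ : θ * θ = θ - 12) {x : K} (hx : IsIntegral ℤ x) : ∃ u v : ℤ, x = u • 1 + v • θ := by
  have hθℚ := mul_self_eq_smul_of_mul_self_eq_sub (R := ℚ) hθ
  obtain ⟨u, v, huv⟩ := exists_neg_forty_seven_smul_eq_of_isIntegral hB hθ hx
  have hx' : x = ((u : ℚ) / -47) • 1 + ((v : ℚ) / -47) • θ := by
    rw [div_eq_inv_mul, div_eq_inv_mul, mul_smul, mul_smul, ← smul_add, Int.cast_smul_eq_zsmul,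
      Int.cast_smul_eq_zsmul, ← huv, inv_smul_smul₀ (by norm_num)]
  obtain ⟨tr, htr⟩ := IsIntegrallyClosed.isIntegral_iff.mp
    (Algebra.isIntegral_trace (R := ℤ) (L := ℚ) hx)
  obtain ⟨nm, hnm⟩ := IsIntegrallyClosed.isIntegral_iff.mp
    (Algebra.isIntegral_norm (R := ℤ) ℚ hx)
  rw [hx', Algebra.trace_smul_one_add_smul hB hθℚ, algebraMap_int_eq, eq_intCast] at htr
  rw [hx', Algebra.norm_smul_one_add_smul hB hθℚ, algebraMap_int_eq, eq_intCast] at hnm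
  have htr' : 47 ∣ 2 * u + v := ⟨-tr, by
    have : ((2 * u + v : ℤ) : ℚ) = ((47 * -tr : ℤ) : ℚ) := by push_cast; linarith
    exact_mod_cast this⟩
  have hnm' : 47 ^ 2 ∣ u ^ 2 + u * v + 12 * v ^ 2 := ⟨nm, by
    have : ((u ^ 2 + u * v + 12 * v ^ 2 : ℤ) : ℚ) = ((47 ^ 2 * nm : ℤ) : ℚ) := by
      push_cast; rw [hnm]; ring
    exact_mod_cast this⟩
  obtain ⟨⟨u', rfl⟩, ⟨v', rfl⟩⟩ := Int.forty_seven_dvd_of_dvd_of_sq_dvd htr' hnm'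
  refine ⟨-u', -v', ?_⟩
  rw [hx', ← Int.cast_smul_eq_zsmul ℚ, ← Int.cast_smul_eq_zsmul ℚ]
  congr 2 <;> push_cast <;> ring

theorem exists_basis_ringOfIntegers (hθ : θ * θ = θ - 12) (hdim : finrank ℚ K = 2) :
    ∃ (ϑ : 𝓞 K) (B : Basis (Fin 2) ℤ (𝓞 K)), algebraMap (𝓞 K) K ϑ = θ ∧ ⇑B = ![1, ϑ] := by
  have hθℚ := notMem_range_algebraMap_of_mul_self_eq_sub hθ
  obtain ⟨Bℚ, hBℚ⟩ := Basis.exists_eq_one_root_of_finrank_eq_two hdim hθℚ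
  let ϑ : 𝓞 K := ⟨θ, isIntegral_of_mul_self_eq (mul_self_eq_smul_of_mul_self_eq_sub (R := ℤ) hθ)⟩
  have hϑ : algebraMap (𝓞 K) K ϑ = θ := rfl
  have hli : LinearIndependent ℤ ![(1 : 𝓞 K), ϑ] := by
    refine .of_comp ((Algebra.linearMap (𝓞 K) K).restrictScalars ℤ) ?_
    convert (hBℚ ▸ Bℚ.linearIndependent).restrict_scalars' ℤ
    ext i
    fin_cases i <;> simp [hϑ]
  have hsp : ⊤ ≤ Submodule.span ℤ (Set.range ![(1 : 𝓞 K), ϑ]) := by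
    rintro x -
    obtain ⟨u, v, huv⟩ := exists_eq_smul_one_add_smul_of_isIntegral hBℚ hθ x.isIntegral_coe
    rw [Matrix.range_cons, Matrix.range_cons, Matrix.range_empty, Set.union_empty,
      Set.singleton_union, Submodule.mem_span_pair]
    exact ⟨u, v, RingOfIntegers.ext (by simp [hϑ, huv])⟩
  exact ⟨ϑ, Basis.mk hli hsp, hϑ, Basis.coe_mk _ _⟩

end QuadraticField

section RingOfIntegers

variable {K : Type*} [Field K] [NumberField K] {ϑ : 𝓞 K} {B : Basis (Fin 2) ℤ (𝓞 K)}

theorem absNorm_span_smul_one_add_smul (hB : ⇑B = ![1, ϑ]) (hϑ : ϑ * ϑ = ϑ - 12) (u v : ℤ) :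
    absNorm (span {u • 1 + v • ϑ}) = (u ^ 2 + u * v + 12 * v ^ 2).natAbs := by
  rw [absNorm_span_singleton,
    Algebra.norm_smul_one_add_smul hB (mul_self_eq_smul_of_mul_self_eq_sub hϑ)]
  ring_nf

theorem discr_eq_neg_forty_seven (hB : ⇑B = ![1, ϑ]) (hϑ : ϑ * ϑ = ϑ - 12) : discr K = -47 := by
  rw [← discr_eq_discr K B,
    Algebra.discr_of_basis_eq_one_root hB (mul_self_eq_smul_of_mul_self_eq_sub hϑ)]
  norm_num

theorem absNorm_span_two (hB : ⇑B = ![1, ϑ]) (hϑ : ϑ * ϑ = ϑ - 12) :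
    absNorm (span {(2 : 𝓞 K), ϑ}) = 2 ∧ absNorm (span {(2 : 𝓞 K), ϑ + 1}) = 2 := by
  have h4 : absNorm (span {(2 : 𝓞 K), ϑ} * span {2, ϑ + 1}) = 2 ^ 2 := by
    rw [span_two_mul_span_two hϑ]
    simpa using absNorm_span_smul_one_add_smul hB hϑ 2 0
  have hP : span {(2 : 𝓞 K), ϑ} ≠ ⊤ := by
    simpa using span_natCast_sub_intCast_ne_top hB hϑ (n := 2) one_lt_two 0 (by decide)
  have hQ : span {(2 : 𝓞 K), ϑ + 1} ≠ ⊤ := by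
    simpa using span_natCast_sub_intCast_ne_top hB hϑ (n := 2) one_lt_two (-1) (by decide)
  exact ⟨absNorm_eq_of_absNorm_mul_eq_sq Nat.prime_two h4 hP hQ,
    absNorm_eq_of_absNorm_mul_eq_sq Nat.prime_two (by rwa [mul_comm]) hQ hP⟩

theorem absNorm_span_three (hB : ⇑B = ![1, ϑ]) (hϑ : ϑ * ϑ = ϑ - 12) :
    absNorm (span {(3 : 𝓞 K), ϑ}) = 3 ∧ absNorm (span {(3 : 𝓞 K), ϑ - 1}) = 3 := by
  have h9 : absNorm (span {(3 : 𝓞 K), ϑ} * span {3, ϑ - 1}) = 3 ^ 2 := by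
    rw [span_three_mul_span_three hϑ]
    simpa using absNorm_span_smul_one_add_smul hB hϑ 3 0
  have hP : span {(3 : 𝓞 K), ϑ} ≠ ⊤ := by
    simpa using span_natCast_sub_intCast_ne_top hB hϑ (n := 3) (by norm_num) 0 (by decide)
  have hQ : span {(3 : 𝓞 K), ϑ - 1} ≠ ⊤ := by
    simpa using span_natCast_sub_intCast_ne_top hB hϑ (n := 3) (by norm_num) 1 (by decide)
  exact ⟨absNorm_eq_of_absNorm_mul_eq_sq Nat.prime_three h9 hP hQ,
    absNorm_eq_of_absNorm_mul_eq_sq Nat.prime_three (by rwa [mul_comm]) hQ hP⟩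

theorem eq_of_isPrime_of_twelve_mem (hB : ⇑B = ![1, ϑ]) (hϑ : ϑ * ϑ = ϑ - 12)
    {M : Ideal (𝓞 K)} (hM : M.IsPrime) (h12 : (12 : 𝓞 K) ∈ M) :
    M = span {2, ϑ} ∨ M = span {2, ϑ + 1} ∨ M = span {3, ϑ} ∨ M = span {3, ϑ - 1} := by
  obtain ⟨h2, h2'⟩ := absNorm_span_two hB hϑ
  obtain ⟨h3, h3'⟩ := absNorm_span_three hB hϑ
  have two (h : (2 : 𝓞 K) ∈ M) : M = span {2, ϑ} ∨ M = span {2, ϑ + 1} :=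
    hM.eq_or_eq_of_mul_le (isMaximal_of_absNorm_eq_prime Nat.prime_two h2)
      (isMaximal_of_absNorm_eq_prime Nat.prime_two h2')
      (by rwa [span_two_mul_span_two hϑ, span_singleton_le_iff_mem])
  have three (h : (3 : 𝓞 K) ∈ M) : M = span {3, ϑ} ∨ M = span {3, ϑ - 1} :=
    hM.eq_or_eq_of_mul_le (isMaximal_of_absNorm_eq_prime Nat.prime_three h3)
      (isMaximal_of_absNorm_eq_prime Nat.prime_three h3')
      (by rwa [span_three_mul_span_three hϑ, span_singleton_le_iff_mem])
  rw [show (12 : 𝓞 K) = 2 * (2 * 3) by norm_num] at h12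
  rcases hM.mem_or_mem h12 with h | h
  · have := two h; tauto
  rcases hM.mem_or_mem h with h | h
  · have := two h; tauto
  · have := three h; tauto

theorem span_theta_eq (hB : ⇑B = ![1, ϑ]) (hϑ : ϑ * ϑ = ϑ - 12) :
    span {ϑ} = span {(2 : 𝓞 K), ϑ} ^ 2 * span {3, ϑ} := by
  refine eq_of_le_of_absNorm_eq ?_ ?_
  · have hmem (x y z : 𝓞 K) (hx : x ∈ ({2, ϑ} : Set (𝓞 K))) (hy : y ∈ ({2, ϑ} : Set (𝓞 K)))
        (hz : z ∈ ({3, ϑ} : Set (𝓞 K))) : x * y * z ∈ span {(2 : 𝓞 K), ϑ} ^ 2 * span {3, ϑ} := by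
      rw [sq]
      exact mul_mem_mul (mul_mem_mul (subset_span hx) (subset_span hy)) (subset_span hz)
    rw [span_singleton_le_iff_mem]
    convert add_mem (add_mem (mul_mem_left _ 2 (hmem 2 ϑ 3 (by simp) (by simp) (by simp)))
      (hmem ϑ ϑ ϑ (by simp) (by simp) (by simp))) (hmem 2 2 3 (by simp) (by simp) (by simp))
      using 1
    linear_combination (-(ϑ + 1)) * hϑ
  · rw [map_mul, map_pow, (absNorm_span_two hB hϑ).1, (absNorm_span_three hB hϑ).1]
    simpa using absNorm_span_smul_one_add_smul hB hϑ 0 1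

theorem span_theta_add_four_eq (hB : ⇑B = ![1, ϑ]) (hϑ : ϑ * ϑ = ϑ - 12) :
    span {ϑ + 4} = span {(2 : 𝓞 K), ϑ} ^ 5 := by
  refine eq_of_le_of_absNorm_eq ?_ ?_
  · have hmem (i j : ℕ) : (2 : 𝓞 K) ^ i * ϑ ^ j ∈ span {(2 : 𝓞 K), ϑ} ^ (i + j) := by
      rw [pow_add]
      exact mul_mem_mul (pow_mem_pow (subset_span (by simp)) i)
        (pow_mem_pow (subset_span (by simp)) j)
    rw [span_singleton_le_iff_mem]
    convert add_mem (add_mem (sub_mem (mul_mem_left _ (-7) (hmem 5 0))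
      (mul_mem_left _ 4 (hmem 4 1))) (hmem 2 3)) (hmem 0 5) using 1
    linear_combination (-(ϑ ^ 3 + ϑ ^ 2 - 7 * ϑ - 19)) * hϑ
  · rw [map_pow, (absNorm_span_two hB hϑ).1]
    simpa [add_comm] using absNorm_span_smul_one_add_smul hB hϑ 4 1

theorem not_isPrincipal_span_two (hB : ⇑B = ![1, ϑ]) (hϑ : ϑ * ϑ = ϑ - 12) :
    ¬ (span {(2 : 𝓞 K), ϑ}).IsPrincipal := by
  rintro ⟨x, hx⟩
  obtain ⟨u, v, rfl⟩ := B.exists_eq_smul_one_add_smul hB x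
  apply Int.natAbs_sq_add_mul_add_twelve_sq_ne_two u v
  rw [← absNorm_span_smul_one_add_smul hB hϑ, ← submodule_span_eq, ← hx]
  exact (absNorm_span_two hB hϑ).1

theorem orderOf_mk0_span_two (hB : ⇑B = ![1, ϑ]) (hϑ : ϑ * ϑ = ϑ - 12)
    (hP : span {(2 : 𝓞 K), ϑ} ∈ (Ideal (𝓞 K))⁰) : orderOf (ClassGroup.mk0 ⟨_, hP⟩) = 5 := by
  have := Fact.mk Nat.prime_five
  refine orderOf_eq_prime ?_ ?_
  · rw [← map_pow, ClassGroup.mk0_eq_one_iff]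
    exact ⟨ϑ + 4, (span_theta_add_four_eq hB hϑ).symm⟩
  · rw [Ne, ClassGroup.mk0_eq_one_iff]
    exact not_isPrincipal_span_two hB hϑ

theorem mk0_mem_zpowers_of_twelve_mem (hB : ⇑B = ![1, ϑ]) (hϑ : ϑ * ϑ = ϑ - 12)
    (hP₂ : span {(2 : 𝓞 K), ϑ} ∈ (Ideal (𝓞 K))⁰) {P : (Ideal (𝓞 K))⁰}
    (hP : (P : Ideal (𝓞 K)).IsPrime) (h12 : (12 : 𝓞 K) ∈ (P : Ideal (𝓞 K))) :
    ClassGroup.mk0 P ∈ Subgroup.zpowers (ClassGroup.mk0 ⟨_, hP₂⟩) := by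
  have hP₃ : span {(3 : 𝓞 K), ϑ} ∈ (Ideal (𝓞 K))⁰ :=
    absNorm_ne_zero_iff_mem_nonZeroDivisors.mp (by simp [(absNorm_span_three hB hϑ).1])
  have hϑ0 : ϑ ≠ 0 := by
    rintro rfl
    norm_num at hϑ
  have h₃ : ClassGroup.mk0 ⟨_, hP₃⟩ ∈ Subgroup.zpowers (ClassGroup.mk0 ⟨_, hP₂⟩) := by
    refine ClassGroup.mk0_mem_of_mul_eq_span_singleton _ (J := ⟨_, hP₂⟩ ^ 2) hϑ0 ?_ ?_
    · rw [SubmonoidClass.coe_pow, mul_comm, ← span_theta_eq hB hϑ]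
    · rw [map_pow]
      exact pow_mem (Subgroup.mem_zpowers _) 2
  rcases eq_of_isPrime_of_twelve_mem hB hϑ hP h12 with h | h | h | h
  · rw [show P = ⟨_, hP₂⟩ from Subtype.ext h]
    exact Subgroup.mem_zpowers _
  · refine ClassGroup.mk0_mem_of_mul_eq_span_singleton _ (J := ⟨_, hP₂⟩) two_ne_zero ?_
      (Subgroup.mem_zpowers _)
    rw [h, mul_comm, span_two_mul_span_two hϑ]
  · rw [show P = ⟨_, hP₃⟩ from Subtype.ext h]
    exact h₃
  · refine ClassGroup.mk0_mem_of_mul_eq_span_singleton _ (J := ⟨_, hP₃⟩) (x := 3) (by norm_num)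
      ?_ h₃
    rw [h, mul_comm, span_three_mul_span_three hϑ]

theorem card_classGroup_eq_five (hB : ⇑B = ![1, ϑ]) (hϑ : ϑ * ϑ = ϑ - 12)
    (hbound : ∀ C : ClassGroup (𝓞 K), ∃ I : (Ideal (𝓞 K))⁰,
      ClassGroup.mk0 I = C ∧ absNorm (I : Ideal (𝓞 K)) ≤ 4) :
    Fintype.card (ClassGroup (𝓞 K)) = 5 := by
  have hP₂ : span {(2 : 𝓞 K), ϑ} ∈ (Ideal (𝓞 K))⁰ :=
    absNorm_ne_zero_iff_mem_nonZeroDivisors.mp (by simp [(absNorm_span_two hB hϑ).1])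
  have hall (C : ClassGroup (𝓞 K)) : C ∈ Subgroup.zpowers (ClassGroup.mk0 ⟨_, hP₂⟩) := by
    obtain ⟨I, rfl, hI⟩ := hbound C
    have hdvd : absNorm (I : Ideal (𝓞 K)) ∣ 12 := by
      have := absNorm_pos_of_nonZeroDivisors I
      interval_cases absNorm (I : Ideal (𝓞 K)) <;> norm_num
    have h12 : (12 : 𝓞 K) ∈ (I : Ideal (𝓞 K)) := by
      simpa using natCast_mem_of_absNorm_dvd hdvd
    exact ClassGroup.mk0_mem_of_forall_isPrime_le _ I fun P hP hIP ↦
      mk0_mem_zpowers_of_twelve_mem hB hϑ hP₂ hP (hIP h12)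
  rw [← Nat.card_eq_fintype_card, ← orderOf_eq_card_of_forall_mem_zpowers hall,
    orderOf_mk0_span_two hB hϑ]

end RingOfIntegers

section Minkowski

open InfinitePlace

variable {K : Type*} [Field K] [NumberField K]

theorem isTotallyComplex_of_sq_eq_neg_natCast {n : ℕ} (hn : 0 < n) {α : K}
    (hα : α ^ 2 = -n) : IsTotallyComplex K := by
  refine ⟨fun v ↦ not_isReal_iff_isComplex.mp fun hv ↦ ?_⟩
  have hsq : (isReal_iff.mp hv).embedding α ^ 2 = -n := by
    rw [← map_pow, hα, map_neg, map_natCast]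
  nlinarith [sq_nonneg ((isReal_iff.mp hv).embedding α), (Nat.cast_pos (α := ℝ)).mpr hn]

theorem exists_ideal_in_class_of_absNorm_le_four (hdisc : discr K = -47)
    (hc : nrComplexPlaces K = 1) (hdim : finrank ℚ K = 2) (C : ClassGroup (𝓞 K)) :
    ∃ I : (Ideal (𝓞 K))⁰, ClassGroup.mk0 I = C ∧ absNorm (I : Ideal (𝓞 K)) ≤ 4 := by
  obtain ⟨I, hIC, hIb⟩ := exists_ideal_in_class_of_norm_le C
  refine ⟨I, hIC, Nat.lt_succ_iff.mp ?_⟩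
  suffices (absNorm (I : Ideal (𝓞 K)) : ℝ) < 5 by exact_mod_cast this
  rw [hc, hdim, hdisc] at hIb
  have hsqrt : √|((-47 : ℤ) : ℝ)| < 7 := by
    rw [Real.sqrt_lt' (by norm_num)]
    norm_num
  have hbound : (4 / π) ^ 1 * ((Nat.factorial 2 : ℝ) / (2 : ℕ) ^ 2 * √|((-47 : ℤ) : ℝ)|) < 5 := by
    rw [show (4 / π) ^ 1 * ((Nat.factorial 2 : ℝ) / (2 : ℕ) ^ 2 * √|((-47 : ℤ) : ℝ)|)
      = 2 * √|((-47 : ℤ) : ℝ)| / π by simp [Nat.factorial]; ring, div_lt_iff₀ Real.pi_pos]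
    nlinarith [Real.pi_gt_three]
  exact hIb.trans_lt hbound

end Minkowski

/-- The class number of ℚ(√-47) is 5. -/
theorem classNumber_sqrt_neg_47 (K : Type*) [Field K] [NumberField K]
    (α : K) (hα : α ^ 2 = -47) (hdim : Module.finrank ℚ K = 2) :
    NumberField.classNumber K = 5 := by
  have hθ : (1 + α) / 2 * ((1 + α) / 2) = (1 + α) / 2 - 12 := by linear_combination hα / 4
  obtain ⟨ϑ, B, hϑθ, hB⟩ := exists_basis_ringOfIntegers hθ hdim
  have hϑ : ϑ * ϑ = ϑ - 12 :=
    FaithfulSMul.algebraMap_injective (𝓞 K) K (by rw [map_mul, map_sub, map_ofNat, hϑθ]; exact hθ)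
  have := isTotallyComplex_of_sq_eq_neg_natCast (n := 47) (by norm_num) (by simpa using hα)
  have hc : InfinitePlace.nrComplexPlaces K = 1 := by linarith [IsTotallyComplex.finrank (K := K)]
  exact card_classGroup_eq_five hB hϑ
    (exists_ideal_in_class_of_absNorm_le_four (discr_eq_neg_forty_seven hB hϑ) hc hdim)
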